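/- On the flat circle with uniform measure and linearly decaying similarity g(x,y) = max(0, 1 - d(x,y)/ε) with ε ∈ (0,1/2], the 2-item identification test success probability equals 1 - (1 - log 2)·b, where b = 2ε. -/
import Mathlib


open MeasureTheory

/-- Distance on the flat circle `[0,1)`. -/
noncomputable def circleDist (x y : ℝ) : ℝ := min |x - y| (1 - |x - y|)

/-- Linearly decaying similarity function with resolution `ε` on the flat circle. -/
noncomputable def glin (ε x y : ℝ) : ℝ := max 0 (1 - circleDist x y / ε)

/-- Probability of answering the probe's index when the probe is the first item. -/
noncomputable def idDec (ε x₁ x₂ : ℝ) : ℝ :=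
  glin ε x₁ x₁ / (glin ε x₁ x₁ + glin ε x₂ x₁)

/-- Identification-test success probability given the two sampled items:
the probe is `x₁` or `x₂`, each with probability `1/2`. -/
noncomputable def idSucc (ε x₁ x₂ : ℝ) : ℝ :=
  1/2 * idDec ε x₁ x₂ + 1/2 * idDec ε x₂ x₁

/-- The non-periodic integrand as a function on `[0,1]`. -/
noncomputable def Hfun (ε : ℝ) : ℝ → ℝ := fun u => (1 + max 0 (1 - min u (1 - u) / ε))⁻¹

/-- The periodized integrand. -/
noncomputable def Ffun (ε : ℝ) : ℝ → ℝ := fun u => Hfun ε (Int.fract u)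

/-- The integrand as a function of distance. -/
noncomputable def Gfun (ε : ℝ) : ℝ → ℝ := fun u => (1 + max 0 (1 - u / ε))⁻¹

lemma glin_self (ε x : ℝ) : glin ε x x = 1 := by
  simp [glin, circleDist]

lemma glin_symm (ε x y : ℝ) : glin ε x y = glin ε y x := by
  simp [glin, circleDist, abs_sub_comm]

lemma idSucc_eq (ε x₁ x₂ : ℝ) : idSucc ε x₁ x₂ = (1 + glin ε x₁ x₂)⁻¹ := by
  unfold idSucc idDec
  rw [glin_self, glin_self, glin_symm ε x₂ x₁]
  rw [show (1:ℝ) / (1 + glin ε x₁ x₂) = (1 + glin ε x₁ x₂)⁻¹ from one_div _]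
  ring

lemma circleDist_fract (x₁ x₂ : ℝ) (h₁ : x₁ ∈ Set.Ico (0:ℝ) 1)
    (h₂ : x₂ ∈ Set.Ico (0:ℝ) 1) :
    circleDist x₁ x₂ = min (Int.fract (x₂ - x₁)) (1 - Int.fract (x₂ - x₁)) := by
  obtain ⟨h10, h11⟩ := h₁; obtain ⟨h20, h21⟩ := h₂
  unfold circleDist
  rcases le_or_gt x₁ x₂ with h | h
  · rw [Int.fract_eq_self.mpr ⟨by linarith, by linarith⟩, abs_sub_comm,
      abs_of_nonneg (by linarith)]
  · have hf : Int.fract (x₂ - x₁) = x₂ - x₁ + 1 := by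
      rw [← Int.fract_add_one (x₂ - x₁)]
      exact Int.fract_eq_self.mpr ⟨by linarith, by linarith⟩
    rw [hf, abs_sub_comm, abs_of_neg (by linarith), min_comm]
    congr 1 <;> ring

lemma Ffun_periodic (ε : ℝ) : Function.Periodic (Ffun ε) 1 := by
  intro u; simp [Ffun, Int.fract_add_one]

lemma Hfun_continuous (ε : ℝ) : Continuous (Hfun ε) := by
  apply Continuous.inv₀
  · exact continuous_const.add (continuous_const.max
      (continuous_const.sub ((continuous_id.min (continuous_const.sub continuous_id)).div_const ε)))
  · intro x
    have : (0:ℝ) ≤ max 0 (1 - min x (1 - x) / ε) := le_max_left _ _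
    nlinarith

lemma Gfun_continuous (ε : ℝ) : Continuous (Gfun ε) := by
  apply Continuous.inv₀
  · exact continuous_const.add (continuous_const.max
      (continuous_const.sub (continuous_id.div_const ε)))
  · intro x
    have : (0:ℝ) ≤ max 0 (1 - x / ε) := le_max_left _ _
    nlinarith

/-- The value of `∫_0^ε Gfun`. -/
lemma integral_Gfun_left (ε : ℝ) (hε0 : 0 < ε) :
    ∫ u in (0:ℝ)..ε, Gfun ε u = ε * Real.log 2 := by
  have heq : ∀ u ∈ Set.uIcc (0:ℝ) ε, Gfun ε u = ε * (2 * ε - u)⁻¹ := by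
    intro u hu
    rw [Set.uIcc_of_le hε0.le] at hu
    obtain ⟨hu0, hu1⟩ := hu
    have h1 : (0:ℝ) ≤ 1 - u / ε := by
      rw [sub_nonneg, div_le_one hε0]; linarith
    have h2 : (0:ℝ) < 2 * ε - u := by linarith
    unfold Gfun
    rw [max_eq_right h1]
    rw [show 1 + (1 - u / ε) = (2 * ε - u) / ε by field_simp; ring]
    rw [inv_div]
    rw [div_eq_mul_inv]
  rw [intervalIntegral.integral_congr heq]
  rw [intervalIntegral.integral_const_mul]
  have : ∫ u in (0:ℝ)..ε, (2 * ε - u)⁻¹ = Real.log 2 := by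
    have := intervalIntegral.integral_comp_sub_left (a := (0:ℝ)) (b := ε)
      (fun x => x⁻¹) (2 * ε)
    rw [this]
    rw [show 2 * ε - ε = ε by ring, show 2 * ε - 0 = 2 * ε by ring]
    rw [integral_inv_of_pos hε0 (by linarith)]
    rw [show 2 * ε / ε = 2 by field_simp]
  rw [this]

/-- The value of `∫_ε^{1/2} Gfun`. -/
lemma integral_Gfun_right (ε : ℝ) (hε0 : 0 < ε) (hε : ε ≤ 1/2) :
    ∫ u in ε..(1/2:ℝ), Gfun ε u = 1/2 - ε := by
  have heq : ∀ u ∈ Set.uIcc ε (1/2:ℝ), Gfun ε u = 1 := by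
    intro u hu
    rw [Set.uIcc_of_le hε] at hu
    obtain ⟨hu0, hu1⟩ := hu
    have h1 : 1 - u / ε ≤ 0 := by
      rw [sub_nonpos, le_div_iff₀ hε0]; linarith
    unfold Gfun
    rw [max_eq_left h1]
    norm_num
  rw [intervalIntegral.integral_congr heq]
  simp

lemma integral_Hfun (ε : ℝ) (hε0 : 0 < ε) (hε : ε ≤ 1/2) :
    ∫ u in (0:ℝ)..1, Hfun ε u = 1 - (1 - Real.log 2) * (2 * ε) := by
  have hHint : ∀ a b : ℝ, IntervalIntegrable (Hfun ε) volume a b :=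
    fun a b => (Hfun_continuous ε).intervalIntegrable a b
  have hGint : ∀ a b : ℝ, IntervalIntegrable (Gfun ε) volume a b :=
    fun a b => (Gfun_continuous ε).intervalIntegrable a b
  have hsplit : ∫ u in (0:ℝ)..1, Hfun ε u
      = (∫ u in (0:ℝ)..(1/2), Hfun ε u) + ∫ u in (1/2:ℝ)..1, Hfun ε u := by
    rw [intervalIntegral.integral_add_adjacent_intervals (hHint 0 (1/2)) (hHint (1/2) 1)]
  have hleft : ∫ u in (0:ℝ)..(1/2), Hfun ε u = ∫ u in (0:ℝ)..(1/2), Gfun ε u := by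
    apply intervalIntegral.integral_congr
    intro u hu
    rw [Set.uIcc_of_le (by norm_num : (0:ℝ) ≤ 1/2)] at hu
    obtain ⟨hu0, hu1⟩ := hu
    unfold Hfun Gfun
    rw [min_eq_left (by linarith)]
  have hright : ∫ u in (1/2:ℝ)..1, Hfun ε u = ∫ u in (0:ℝ)..(1/2), Gfun ε u := by
    have heq : ∀ u ∈ Set.uIcc (1/2:ℝ) 1, Hfun ε u = Gfun ε (1 - u) := by
      intro u hu
      rw [Set.uIcc_of_le (by norm_num : (1/2:ℝ) ≤ 1)] at hu
      obtain ⟨hu0, hu1⟩ := hu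
      unfold Hfun Gfun
      rw [min_eq_right (by linarith)]
    rw [intervalIntegral.integral_congr heq]
    have := intervalIntegral.integral_comp_sub_left (a := (1/2:ℝ)) (b := 1) (Gfun ε) 1
    rw [this]
    norm_num
  have hGsplit : ∫ u in (0:ℝ)..(1/2), Gfun ε u
      = (∫ u in (0:ℝ)..ε, Gfun ε u) + ∫ u in ε..(1/2:ℝ), Gfun ε u := by
    rw [intervalIntegral.integral_add_adjacent_intervals (hGint 0 ε) (hGint ε (1/2))]
  rw [hsplit, hleft, hright, hGsplit, integral_Gfun_left ε hε0,
    integral_Gfun_right ε hε0 hε]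
  ring

lemma inner_integral (ε : ℝ) (hε0 : 0 < ε) (hε : ε ≤ 1/2) (x₁ : ℝ)
    (h₁ : x₁ ∈ Set.Ico (0:ℝ) 1) :
    ∫ x₂ in Set.Ico (0:ℝ) 1, idSucc ε x₁ x₂ = 1 - (1 - Real.log 2) * (2 * ε) := by
  have hpt : ∀ x₂ ∈ Set.Ico (0:ℝ) 1, idSucc ε x₁ x₂ = Ffun ε (x₂ - x₁) := by
    intro x₂ h₂
    rw [idSucc_eq, Ffun, Hfun, glin, circleDist_fract x₁ x₂ h₁ h₂]
  calc ∫ x₂ in Set.Ico (0:ℝ) 1, idSucc ε x₁ x₂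
      = ∫ x₂ in Set.Ico (0:ℝ) 1, Ffun ε (x₂ - x₁) := by
        exact setIntegral_congr_fun measurableSet_Ico hpt
    _ = ∫ x₂ in Set.Ioc (0:ℝ) 1, Ffun ε (x₂ - x₁) := setIntegral_congr_set Ico_ae_eq_Ioc
    _ = ∫ x₂ in (0:ℝ)..1, Ffun ε (x₂ - x₁) :=
        (intervalIntegral.integral_of_le (by norm_num)).symm
    _ = ∫ u in (0:ℝ) - x₁..1 - x₁, Ffun ε u :=
        intervalIntegral.integral_comp_sub_right (Ffun ε) x₁
    _ = ∫ u in (0:ℝ)..1, Ffun ε u := by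
        have := (Ffun_periodic ε).intervalIntegral_add_eq ((0:ℝ) - x₁) 0
        rw [show (0:ℝ) - x₁ + 1 = 1 - x₁ by ring, show (0:ℝ) + 1 = 1 by ring] at this
        exact this
    _ = ∫ u in (0:ℝ)..1, Hfun ε u := by
        rw [intervalIntegral.integral_of_le (by norm_num : (0:ℝ) ≤ 1),
          intervalIntegral.integral_of_le (by norm_num : (0:ℝ) ≤ 1),
          ← setIntegral_congr_set (μ := volume) Ico_ae_eq_Ioc,
          ← setIntegral_congr_set (μ := volume) Ico_ae_eq_Ioc]
        apply setIntegral_congr_fun measurableSet_Ico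
        intro u hu
        simp only [Ffun]
        rw [Int.fract_eq_self.mpr ⟨hu.1, hu.2⟩]
    _ = 1 - (1 - Real.log 2) * (2 * ε) := integral_Hfun ε hε0 hε

theorem stmt17 (ε : ℝ) (hε0 : 0 < ε) (hε : ε ≤ 1/2) (b : ℝ) (hb : b = 2 * ε) :
    ∫ x₁ in Set.Ico (0:ℝ) 1, ∫ x₂ in Set.Ico (0:ℝ) 1, idSucc ε x₁ x₂
      = 1 - (1 - Real.log 2) * b := by
  subst hb
  rw [setIntegral_congr_fun measurableSet_Ico (inner_integral ε hε0 hε)]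
  rw [setIntegral_const]
  simp [Real.volume_Ico]
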